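/- In sl(3), the element r_{h;ξ} = h·r_DJ - ξ(H_{13} ∧ E_{13} + 2 E_{12} ∧ E_{23}) satisfies the modified classical Yang–Baxter equation: [[r_{h;ξ}, r_{h;ξ}]] is ad-invariant (equal to h² times the ad-invariant element [[r_DJ, r_DJ]]), for all scalars h, ξ. -/

import Mathlib

/-!
For `ρ ∈ 𝔤 ⊗ 𝔤`, the commutators `[ρ₁₂, ρ₁₃] + [ρ₁₂, ρ₂₃] + [ρ₁₃, ρ₂₃]` computed in `U𝔤^{⊗3}`
only involve Lie brackets of `𝔤`, so `[[ρ, ρ]]` is the image of `Y(ρ, ρ)` for the bilinear map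
`Y : 𝔤 ⊗ 𝔤 → 𝔤 ⊗ 𝔤 → 𝔤^{⊗3}`, `Y(a ⊗ b, c ⊗ d) = [a,c] ⊗ b ⊗ d + a ⊗ [b,c] ⊗ d + a ⊗ c ⊗ [b,d]`.
By bilinearity `Y(h r - ξ s, h r - ξ s) = h² Y(r, r) - hξ (Y(r, s) + Y(s, r)) + ξ² Y(s, s)`, and for
`r = r_DJ`, `s` the jordanian part, the last two terms vanish by a computation with matrix units.
The non-skew `r_DJ` itself solves the classical Yang–Baxter equation `Y(r, r) = 0`, so its
Schouten bracket is zero, hence ad-invariant.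
-/

open scoped TensorProduct

noncomputable section

attribute [local instance 100] LieRing.ofAssociativeRing

abbrev gl3 := Matrix (Fin 3) (Fin 3) ℚ
abbrev U3 := UniversalEnvelopingAlgebra ℚ gl3

noncomputable def ι3 : gl3 →ₗ[ℚ] U3 := (UniversalEnvelopingAlgebra.ι ℚ).toLinearMap

noncomputable def emb : gl3 ⊗[ℚ] gl3 →ₗ[ℚ] U3 ⊗[ℚ] U3 := TensorProduct.map ι3 ι3

noncomputable def q12 : U3 ⊗[ℚ] U3 →ₐ[ℚ] (U3 ⊗[ℚ] U3) ⊗[ℚ] U3 :=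
  Algebra.TensorProduct.includeLeft

noncomputable def q13 : U3 ⊗[ℚ] U3 →ₐ[ℚ] (U3 ⊗[ℚ] U3) ⊗[ℚ] U3 :=
  Algebra.TensorProduct.map Algebra.TensorProduct.includeLeft (AlgHom.id ℚ U3)

noncomputable def q23 : U3 ⊗[ℚ] U3 →ₐ[ℚ] (U3 ⊗[ℚ] U3) ⊗[ℚ] U3 :=
  Algebra.TensorProduct.map Algebra.TensorProduct.includeRight (AlgHom.id ℚ U3)

/-- the Schouten bracket [[ρ,ρ]] -/
noncomputable def schouten (ρ : U3 ⊗[ℚ] U3) : (U3 ⊗[ℚ] U3) ⊗[ℚ] U3 :=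
  ⁅q12 ρ, q13 ρ⁆ + ⁅q12 ρ, q23 ρ⁆ + ⁅q13 ρ, q23 ρ⁆

noncomputable def E (i j : Fin 3) : gl3 := Matrix.single i j 1
noncomputable def H1 : gl3 := E 0 0 - E 1 1
noncomputable def H2 : gl3 := E 1 1 - E 2 2
noncomputable def H13 : gl3 := E 0 0 - E 2 2

/-- a ∧ b = a ⊗ b - b ⊗ a -/
noncomputable def wedge (a b : gl3) : gl3 ⊗[ℚ] gl3 := a ⊗ₜ[ℚ] b - b ⊗ₜ[ℚ] a

/-- the Drinfeld–Jimbo classical r-matrix of sl(3) -/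
noncomputable def rDJ : gl3 ⊗[ℚ] gl3 :=
  (1 / 3 : ℚ) • ((2 : ℚ) • (H1 ⊗ₜ[ℚ] H1) + (2 : ℚ) • (H2 ⊗ₜ[ℚ] H2) +
    H1 ⊗ₜ[ℚ] H2 + H2 ⊗ₜ[ℚ] H1) +
  (2 : ℚ) • (E 1 0 ⊗ₜ[ℚ] E 0 1 + E 2 1 ⊗ₜ[ℚ] E 1 2 + E 2 0 ⊗ₜ[ℚ] E 0 2)

/-- the jordanian part -/
noncomputable def rj : gl3 ⊗[ℚ] gl3 := wedge H13 (E 0 2) + (2 : ℚ) • wedge (E 0 1) (E 1 2)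

/-- a ⊗ 1 ⊗ 1 + 1 ⊗ a ⊗ 1 + 1 ⊗ 1 ⊗ a -/
noncomputable def ins (a : gl3) : (U3 ⊗[ℚ] U3) ⊗[ℚ] U3 :=
  (ι3 a ⊗ₜ[ℚ] 1) ⊗ₜ[ℚ] 1 + ((1 : U3) ⊗ₜ[ℚ] ι3 a) ⊗ₜ[ℚ] 1 +
    ((1 : U3) ⊗ₜ[ℚ] (1 : U3)) ⊗ₜ[ℚ] ι3 a


open TensorProduct

namespace LieAlgebra

variable (R L : Type*) [CommRing R] [LieRing L] [LieAlgebra R L]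

def bracket₁₂₁₃ : L ⊗[R] L →ₗ[R] L ⊗[R] L →ₗ[R] (L ⊗[R] L) ⊗[R] L :=
  (map₂ (LieModule.toEnd R L L : L →ₗ[R] L →ₗ[R] L) (TensorProduct.mk R L L)).compr₂
    (TensorProduct.assoc R L L L).symm.toLinearMap

def bracket₁₂₂₃ : L ⊗[R] L →ₗ[R] L ⊗[R] L →ₗ[R] (L ⊗[R] L) ⊗[R] L :=
  ((map₂ (TensorProduct.mk R L L) (LieModule.toEnd R L L : L →ₗ[R] L →ₗ[R] L)).compr₂
    (TensorProduct.rightComm R L L L).toLinearMap).compl₂ (TensorProduct.comm R L L).toLinearMap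

def bracket₁₃₂₃ : L ⊗[R] L →ₗ[R] L ⊗[R] L →ₗ[R] (L ⊗[R] L) ⊗[R] L :=
  map₂ (TensorProduct.mk R L L) (LieModule.toEnd R L L : L →ₗ[R] L →ₗ[R] L)

def yangBaxter : L ⊗[R] L →ₗ[R] L ⊗[R] L →ₗ[R] (L ⊗[R] L) ⊗[R] L :=
  bracket₁₂₁₃ R L + bracket₁₂₂₃ R L + bracket₁₃₂₃ R L

variable {R L}

@[simp] theorem bracket₁₂₁₃_tmul (a b c d : L) :
    bracket₁₂₁₃ R L (a ⊗ₜ b) (c ⊗ₜ d) = (⁅a, c⁆ ⊗ₜ b) ⊗ₜ d := by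
  simp [bracket₁₂₁₃, map₂]

@[simp] theorem bracket₁₂₂₃_tmul (a b c d : L) :
    bracket₁₂₂₃ R L (a ⊗ₜ b) (c ⊗ₜ d) = (a ⊗ₜ ⁅b, c⁆) ⊗ₜ d := by
  simp [bracket₁₂₂₃, map₂]

@[simp] theorem bracket₁₃₂₃_tmul (a b c d : L) :
    bracket₁₃₂₃ R L (a ⊗ₜ b) (c ⊗ₜ d) = (a ⊗ₜ c) ⊗ₜ ⁅b, d⁆ := by
  simp [bracket₁₃₂₃, map₂]

theorem yangBaxter_tmul (a b c d : L) :
    yangBaxter R L (a ⊗ₜ b) (c ⊗ₜ d) =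
      (⁅a, c⁆ ⊗ₜ b) ⊗ₜ d + (a ⊗ₜ ⁅b, c⁆) ⊗ₜ d + (a ⊗ₜ c) ⊗ₜ ⁅b, d⁆ := by
  simp [yangBaxter]

theorem yangBaxter_map_map {L' : Type*} [LieRing L'] [LieAlgebra R L'] (f : L →ₗ⁅R⁆ L')
    (ρ σ : L ⊗[R] L) :
    yangBaxter R L' (map f.toLinearMap f.toLinearMap ρ) (map f.toLinearMap f.toLinearMap σ) =
      map (map f.toLinearMap f.toLinearMap) f.toLinearMap (yangBaxter R L ρ σ) := by
  have h : (yangBaxter R L').compl₁₂ (map f.toLinearMap f.toLinearMap)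
      (map f.toLinearMap f.toLinearMap) =
      (yangBaxter R L).compr₂ (map (map f.toLinearMap f.toLinearMap) f.toLinearMap) := by
    ext a b c d
    simp [yangBaxter_tmul]
  exact LinearMap.congr_fun₂ h ρ σ

end LieAlgebra

section
open LieAlgebra
open Algebra.TensorProduct (includeLeft includeRight)
variable {R A : Type*} [CommRing R] [Ring A] [Algebra R A]

local notation "ι₁₂" => (includeLeft : A ⊗[R] A →ₐ[R] (A ⊗[R] A) ⊗[R] A)
local notation "ι₁₃" => Algebra.TensorProduct.map (includeLeft : A →ₐ[R] A ⊗[R] A) (AlgHom.id R A)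
local notation "ι₂₃" => Algebra.TensorProduct.map (includeRight : A →ₐ[R] A ⊗[R] A) (AlgHom.id R A)

theorem lie_includeLeft_map_includeLeft (ρ σ : A ⊗[R] A) :
    ⁅ι₁₂ ρ, ι₁₃ σ⁆ = bracket₁₂₁₃ R A ρ σ := by
  induction ρ using TensorProduct.induction_on with
  | zero => simp
  | add x y hx hy => simp only [map_add, add_lie, LinearMap.add_apply, hx, hy]
  | tmul a b =>
    induction σ using TensorProduct.induction_on with
    | zero => simp
    | add x y hx hy => simp only [map_add, lie_add, hx, hy]
    | tmul c d => simp [Ring.lie_def, sub_tmul]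

theorem lie_includeLeft_map_includeRight (ρ σ : A ⊗[R] A) :
    ⁅ι₁₂ ρ, ι₂₃ σ⁆ = bracket₁₂₂₃ R A ρ σ := by
  induction ρ using TensorProduct.induction_on with
  | zero => simp
  | add x y hx hy => simp only [map_add, add_lie, LinearMap.add_apply, hx, hy]
  | tmul a b =>
    induction σ using TensorProduct.induction_on with
    | zero => simp
    | add x y hx hy => simp only [map_add, lie_add, hx, hy]
    | tmul c d => simp [Ring.lie_def, sub_tmul, tmul_sub]

theorem lie_map_includeLeft_map_includeRight (ρ σ : A ⊗[R] A) :
    ⁅ι₁₃ ρ, ι₂₃ σ⁆ = bracket₁₃₂₃ R A ρ σ := by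
  induction ρ using TensorProduct.induction_on with
  | zero => simp
  | add x y hx hy => simp only [map_add, add_lie, LinearMap.add_apply, hx, hy]
  | tmul a b =>
    induction σ using TensorProduct.induction_on with
    | zero => simp
    | add x y hx hy => simp only [map_add, lie_add, hx, hy]
    | tmul c d => simp [Ring.lie_def, tmul_sub]

end

theorem schouten_eq_yangBaxter (ρ : U3 ⊗[ℚ] U3) :
    schouten ρ = LieAlgebra.yangBaxter ℚ U3 ρ ρ := by
  simp only [schouten, q12, q13, q23, LieAlgebra.yangBaxter, LinearMap.add_apply,
    lie_includeLeft_map_includeLeft, lie_includeLeft_map_includeRight,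
    lie_map_includeLeft_map_includeRight]

theorem schouten_emb (ρ : gl3 ⊗[ℚ] gl3) :
    schouten (emb ρ) = map emb ι3 (LieAlgebra.yangBaxter ℚ gl3 ρ ρ) := by
  rw [schouten_eq_yangBaxter]
  exact LieAlgebra.yangBaxter_map_map (UniversalEnvelopingAlgebra.ι ℚ) ρ ρ

theorem LinearMap.bilinear_smul_sub_smul_self {R M N : Type*} [CommRing R] [AddCommGroup M]
    [Module R M] [AddCommGroup N] [Module R N] (B : M →ₗ[R] M →ₗ[R] N) (h ξ : R) (x y : M) :
    B (h • x - ξ • y) (h • x - ξ • y) =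
      h ^ 2 • B x x - (h * ξ) • (B x y + B y x) + ξ ^ 2 • B y y := by
  simp only [map_sub, map_smul, LinearMap.sub_apply, LinearMap.smul_apply]
  module

theorem Matrix.lie_single_single {n R : Type*} [Fintype n] [DecidableEq n] [Ring R]
    (i j k l : n) :
    ⁅Matrix.single i j (1 : R), Matrix.single k l (1 : R)⁆ =
      (if j = k then Matrix.single i l 1 else 0) - (if l = i then Matrix.single k j 1 else 0) := by
  rw [Ring.lie_def]
  congr 1 <;> split_ifs with h <;>
    simp [h, Matrix.single_mul_single_same, Matrix.single_mul_single_of_ne]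

theorem lie_E_E (i j k l : Fin 3) :
    ⁅E i j, E k l⁆ = (if j = k then E i l else 0) - (if l = i then E k j else 0) :=
  Matrix.lie_single_single i j k l

theorem rDJ_eq_sum_E : rDJ =
    (2 / 3 : ℚ) • (E 0 0 ⊗ₜ E 0 0 + E 1 1 ⊗ₜ E 1 1 + E 2 2 ⊗ₜ E 2 2) -
    (1 / 3 : ℚ) • (E 0 0 ⊗ₜ E 1 1 + E 0 0 ⊗ₜ E 2 2 + E 1 1 ⊗ₜ E 0 0 + E 1 1 ⊗ₜ E 2 2 +
      E 2 2 ⊗ₜ E 0 0 + E 2 2 ⊗ₜ E 1 1) +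
    (2 : ℚ) • (E 1 0 ⊗ₜ E 0 1 + E 2 1 ⊗ₜ E 1 2 + E 2 0 ⊗ₜ E 0 2) := by
  simp only [rDJ, H1, H2, sub_tmul, tmul_sub]
  module

theorem rj_eq_sum_E : rj =
    E 0 0 ⊗ₜ E 0 2 - E 2 2 ⊗ₜ E 0 2 - E 0 2 ⊗ₜ E 0 0 + E 0 2 ⊗ₜ E 2 2 +
      (2 : ℚ) • (E 0 1 ⊗ₜ E 1 2 - E 1 2 ⊗ₜ E 0 1) := by
  simp only [rj, wedge, H13, sub_tmul, tmul_sub]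
  module

theorem yangBaxter_rj : LieAlgebra.yangBaxter ℚ gl3 rj rj = 0 := by
  rw [rj_eq_sum_E]
  simp only [map_add, map_sub, map_smul, LinearMap.add_apply, LinearMap.sub_apply,
    LinearMap.smul_apply, LieAlgebra.yangBaxter_tmul, lie_E_E, Fin.reduceEq, reduceIte,
    tmul_zero, zero_tmul, tmul_sub, sub_tmul]
  module

theorem yangBaxter_rDJ : LieAlgebra.yangBaxter ℚ gl3 rDJ rDJ = 0 := by
  rw [rDJ_eq_sum_E]
  simp only [map_add, map_sub, map_smul, LinearMap.add_apply, LinearMap.sub_apply,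
    LinearMap.smul_apply, LieAlgebra.yangBaxter_tmul, lie_E_E, Fin.reduceEq, reduceIte,
    tmul_zero, zero_tmul, tmul_sub, sub_tmul]
  module

theorem yangBaxter_rDJ_rj_add_yangBaxter_rj_rDJ :
    LieAlgebra.yangBaxter ℚ gl3 rDJ rj + LieAlgebra.yangBaxter ℚ gl3 rj rDJ = 0 := by
  rw [rDJ_eq_sum_E, rj_eq_sum_E]
  simp only [map_add, map_sub, map_smul, LinearMap.add_apply, LinearMap.sub_apply,
    LinearMap.smul_apply, LieAlgebra.yangBaxter_tmul, lie_E_E, Fin.reduceEq, reduceIte,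
    tmul_zero, zero_tmul, tmul_sub, sub_tmul]
  module

theorem r_h_xi_satisfies_MCYBE :
    (∀ h ξ : ℚ, schouten (emb (h • rDJ - ξ • rj)) = (h ^ 2) • schouten (emb rDJ)) ∧
    (∀ a : gl3, a.trace = 0 → ⁅ins a, schouten (emb rDJ)⁆ = 0) := by
  refine ⟨fun h ξ => ?_, fun a _ => ?_⟩
  · rw [schouten_emb, schouten_emb, LinearMap.bilinear_smul_sub_smul_self,
      yangBaxter_rDJ_rj_add_yangBaxter_rj_rDJ, yangBaxter_rj]
    simp only [smul_zero, sub_zero, add_zero, map_smul]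
  · rw [schouten_emb, yangBaxter_rDJ, map_zero, lie_zero]
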